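/- Let f : ℤ^m →ₗ[ℤ] ℤ^n be a ℤ-linear map. The following are equivalent: (a) the cokernel ℤ^n ⧸ range f is a free ℤ-module; (b) for every prime number p, the rank of f over the field ZMod p equals the rank of f over ℚ. (This is the key equivalence, obtained from the Smith normal form of f, underlying the paper's Theorems 1 and 2 relating field-independence of persistence diagrams to freeness of cokernels of the maps H_q(X_m; ℤ) → H_q(X_n; ℤ).) -/

import Mathlib

/-- The rank of a `ℤ`-linear map `f : ℤ^m → ℤ^n` over a field `K` (regarded as a
`ℤ`-algebra): the rank over `K` of the matrix of `f` with entries mapped through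
`ℤ → K`, i.e. the `K`-dimension of the range of the induced `K`-linear map. -/
noncomputable def rankOver {m n : ℕ} (f : (Fin m → ℤ) →ₗ[ℤ] (Fin n → ℤ))
    (K : Type*) [Field K] : ℕ :=
  ((LinearMap.toMatrix (Pi.basisFun ℤ (Fin m)) (Pi.basisFun ℤ (Fin n)) f).map
    (Int.cast : ℤ → K)).rank

/-!
Put `range f ⊆ ℤ^n` in Smith normal form: there are bases `(e_j)` of `ℤ^n` and `(a_i • e_{σ i})`
of `range f` with all `a_i ≠ 0`. The cokernel is then torsion-free, i.e. free, iff every `a_i`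
is a unit. On the other hand `f` is the diagonal matrix of the `a_i` multiplied on the left by
left-invertible matrices (the change of basis and the embedding `i ↦ σ i`) and on the right by a
right-invertible one (the surjection `ℤ^m ↠ range f` has a section because `range f` is free);
such factors survive reduction to any field `K`, so the rank over `K` is the number of `a_i`
nonzero in `K`. Over `ℚ` that is all of them, and over `ZMod p` it is all of them iff `p` divides
no `a_i`.
-/

open Matrix

namespace Matrix

variable {l m n R K : Type*} [Fintype m] [Fintype n] [DecidableEq m]

theorem rank_mul_eq_left_of_mul_eq_one [CommRing K] [StrongRankCondition K] (A : Matrix l m K)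
    {B : Matrix m n K} {C : Matrix n m K} (h : B * C = 1) : (A * B).rank = A.rank :=
  le_antisymm (rank_mul_le_left A B) <| by
    simpa [Matrix.mul_assoc, h] using rank_mul_le_left (A * B) C

theorem rank_mul_eq_right_of_mul_eq_one [Fintype l] [CommRing K] [StrongRankCondition K]
    {A : Matrix l m K} (B : Matrix m n K) {C : Matrix m l K} (h : C * A = 1) :
    (A * B).rank = B.rank :=
  le_antisymm (rank_mul_le_right A B) <| by
    simpa [← Matrix.mul_assoc, h] using rank_mul_le_right C (A * B)

variable [CommRing R] [CommRing K] [StrongRankCondition K] (c : R →+* K)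

theorem rank_map_mul_eq_left_of_mul_eq_one (A : Matrix l m R) {B : Matrix m n R}
    {C : Matrix n m R} (h : B * C = 1) : ((A * B).map c).rank = (A.map c).rank := by
  rw [Matrix.map_mul]
  refine rank_mul_eq_left_of_mul_eq_one _ (C := C.map c) ?_
  rw [← Matrix.map_mul, h, Matrix.map_one _ c.map_zero c.map_one]

theorem rank_map_mul_eq_right_of_mul_eq_one [Fintype l] {A : Matrix l m R} (B : Matrix m n R)
    {C : Matrix m l R} (h : C * A = 1) : ((A * B).map c).rank = (B.map c).rank := by
  rw [Matrix.map_mul]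
  refine rank_mul_eq_right_of_mul_eq_one _ (C := C.map c) ?_
  rw [← Matrix.map_mul, h, Matrix.map_one _ c.map_zero c.map_one]

end Matrix

theorem Nat.card_subtype_eq_card_iff {α : Type*} [Finite α] {p : α → Prop} :
    Nat.card {x // p x} = Nat.card α ↔ ∀ x, p x :=
  (Set.eq_univ_iff_ncard {x | p x}).symm.trans Set.eq_univ_iff_forall

theorem Int.isUnit_iff_forall_prime_cast_ne_zero {a : ℤ} :
    IsUnit a ↔ ∀ (p : ℕ) [Fact p.Prime], (a : ZMod p) ≠ 0 := by
  simp only [isUnit_iff_natAbs_eq, Nat.eq_one_iff_not_exists_prime_dvd, ne_eq,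
    ZMod.intCast_zmod_eq_zero_iff_dvd, Int.natCast_dvd]
  exact ⟨fun h p hp => h p hp.out, fun h p hp => haveI := Fact.mk hp; h p⟩

namespace Module.Basis.SmithNormalForm

variable {R M ι : Type*} [CommRing R] [AddCommGroup M] [Module R M] {n : ℕ}

section

variable {N : Submodule R M} (snf : Basis.SmithNormalForm N ι n)

theorem a_ne_zero [Nontrivial R] (i : Fin n) : snf.a i ≠ 0 := fun h =>
  snf.bN.ne_zero i <| Subtype.ext <| by simp [snf.snf, h]

theorem isUnit_a_of_mem {i : Fin n} (h : snf.bM (snf.f i) ∈ N) : IsUnit (snf.a i) := by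
  refine .of_mul_eq_one (snf.bN.repr ⟨_, h⟩ i) ?_
  have := snf.repr_apply_embedding_eq_repr_smul ⟨_, h⟩ (i := i)
  rwa [map_smul, Finsupp.smul_apply, smul_eq_mul, repr_self, Finsupp.single_eq_same,
    eq_comm] at this

theorem eq_span_image_of_isUnit (h : ∀ i, IsUnit (snf.a i)) :
    N = Submodule.span R (snf.bM '' Set.range snf.f) := by
  refine le_antisymm (fun x hx => ?_) (Submodule.span_le.mpr ?_)
  · obtain ⟨c, rfl⟩ := snf.bN.mem_submodule_iff'.mp hx
    refine Submodule.sum_mem _ fun i _ => Submodule.smul_mem _ _ ?_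
    rw [snf.snf]
    exact Submodule.smul_mem _ _ (Submodule.subset_span ⟨snf.f i, ⟨i, rfl⟩, rfl⟩)
  · rintro - ⟨-, ⟨i, rfl⟩, rfl⟩
    obtain ⟨u, hu⟩ := h i
    have : snf.bM (snf.f i) = (↑u⁻¹ : R) • (snf.bN i : M) := by
      rw [snf.snf, smul_smul, ← hu, Units.inv_mul, one_smul]
    rw [SetLike.mem_coe, this]
    exact N.smul_mem _ (snf.bN i).2

theorem isTorsionFree_quotient_iff [IsDomain R] :
    IsTorsionFree R (M ⧸ N) ↔ ∀ i, IsUnit (snf.a i) := by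
  rw [isTorsionFree_iff_smul_eq_zero]
  constructor
  · intro htf i
    have hzero : snf.a i • Submodule.Quotient.mk (p := N) (snf.bM (snf.f i)) = 0 := by
      rw [← Submodule.Quotient.mk_smul, Submodule.Quotient.mk_eq_zero, ← snf.snf]
      exact (snf.bN i).2
    exact snf.isUnit_a_of_mem <| (Submodule.Quotient.mk_eq_zero N).mp <|
      (htf _ _ hzero).resolve_left (snf.a_ne_zero i)
  · rintro h r ⟨x⟩ hrx
    refine or_iff_not_imp_left.mpr fun hr => (Submodule.Quotient.mk_eq_zero N).mpr ?_
    replace hrx : r • x ∈ N := (Submodule.Quotient.mk_eq_zero N).mp hrx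
    rw [snf.eq_span_image_of_isUnit h, Basis.mem_span_image] at hrx ⊢
    rwa [map_smul, Finsupp.support_smul_eq hr] at hrx

theorem toMatrix_subtype [Fintype ι] [DecidableEq ι] :
    LinearMap.toMatrix snf.bN snf.bM N.subtype =
      (1 : Matrix ι ι R).submatrix id snf.f * diagonal snf.a := by
  ext j i
  rw [LinearMap.toMatrix_apply, mul_diagonal]
  simp [snf.snf, Finsupp.single_apply, one_apply, eq_comm]

end

theorem rank_map_toMatrix {K M' κ : Type*} [Field K] [AddCommGroup M'] [Module R M']
    [Fintype ι] [DecidableEq ι] [Fintype κ] [DecidableEq κ] (c : R →+* K) (b' : Basis κ R M')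
    (b : Basis ι R M) (f : M' →ₗ[R] M) (snf : Basis.SmithNormalForm (LinearMap.range f) ι n) :
    ((LinearMap.toMatrix b' b f).map c).rank = Nat.card {i // c (snf.a i) ≠ 0} := by
  classical
  have := Module.Free.of_basis snf.bN
  obtain ⟨s, hs⟩ := Module.projective_lifting_property f.rangeRestrict LinearMap.id
    f.surjective_rangeRestrict
  have hfactor : LinearMap.toMatrix b' b f = b.toMatrix snf.bM *
      ((1 : Matrix ι ι R).submatrix id snf.f * diagonal snf.a *
        LinearMap.toMatrix b' snf.bN f.rangeRestrict) := by
    rw [← toMatrix_subtype, ← LinearMap.toMatrix_comp, basis_toMatrix_mul_linearMap_toMatrix]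
    rfl
  have hsection : LinearMap.toMatrix b' snf.bN f.rangeRestrict *
      LinearMap.toMatrix snf.bN b' s = 1 := by
    rw [← LinearMap.toMatrix_comp, hs, LinearMap.toMatrix_id]
  have hembedding : ((1 : Matrix ι ι R).submatrix id snf.f)ᵀ *
      (1 : Matrix ι ι R).submatrix id snf.f = 1 := by
    ext i i'
    simp [mul_apply, one_apply]
  rw [hfactor, rank_map_mul_eq_right_of_mul_eq_one c _ (snf.bM.toMatrix_mul_toMatrix_flip b),
    rank_map_mul_eq_left_of_mul_eq_one c _ hsection,
    rank_map_mul_eq_right_of_mul_eq_one c _ hembedding, diagonal_map c.map_zero,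
    rank_diagonal, Nat.card_eq_fintype_card]

end Module.Basis.SmithNormalForm

/-- For a `ℤ`-linear map `f : ℤ^m → ℤ^n`, the cokernel `ℤ^n ⧸ range f`
is a free `ℤ`-module if and only if for every prime `p` the rank of `f` over `ZMod p`
equals the rank of `f` over `ℚ`. -/
theorem coker_free_iff_rankOver_eq
    {m n : ℕ} (f : (Fin m → ℤ) →ₗ[ℤ] (Fin n → ℤ)) :
    Module.Free ℤ ((Fin n → ℤ) ⧸ LinearMap.range f) ↔
      ∀ (p : ℕ) [Fact p.Prime], rankOver f (ZMod p) = rankOver f ℚ := by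
  obtain ⟨r, snf⟩ := (LinearMap.range f).smithNormalForm (Pi.basisFun ℤ (Fin n))
  have hrank (K : Type) [Field K] : rankOver f K = Nat.card {i // (snf.a i : K) ≠ 0} :=
    snf.rank_map_toMatrix (Int.castRingHom K) _ _ f
  have hrank_rat : rankOver f ℚ = Nat.card (Fin r) :=
    (hrank ℚ).trans <| Nat.card_subtype_eq_card_iff.mpr fun i =>
      Int.cast_ne_zero.mpr (snf.a_ne_zero i)
  simp only [Module.free_iff_isTorsionFree, snf.isTorsionFree_quotient_iff,
    Int.isUnit_iff_forall_prime_cast_ne_zero, hrank_rat, hrank, Nat.card_subtype_eq_card_iff]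
  exact ⟨fun h p _ i => h i p, fun h i p _ => h p i⟩
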